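/- arXiv:0811.0189 — 6 statements merged into one kernel-verified Lean document; each statement's English description precedes it below -/
import Mathlib

section
/- For every smooth compactly supported function u on (0,∞) and every c > 0, ∫₀^∞ |−u''(x) + c·u(x)/x²|² dx ≥ (c² − (3/2)c + 9/16) · ∫₀^∞ |u(x)|²/x⁴ dx. -/
open Real MeasureTheory Set Filter

set_option maxHeartbeats 1000000 in
/-- For smooth compactly supported `u` on `(0,∞)` and `c > 0`,
`∫ |−u'' + c u/x²|² ≥ (c² − (3/2)c + 9/16) ∫ |u|²/x⁴`. -/
theorem orthogonal_hardy_inequality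
    (u : ℝ → ℝ) (hu : ContDiff ℝ (⊤ : ℕ∞) u) (hcs : HasCompactSupport u)
    (hsupp : tsupport u ⊆ Set.Ioi (0 : ℝ)) (c : ℝ) (hc : 0 < c) :
    (c ^ 2 - (3 / 2) * c + 9 / 16) * ∫ x in Set.Ioi (0 : ℝ), (u x) ^ 2 / x ^ 4
      ≤ ∫ x in Set.Ioi (0 : ℝ), (-(iteratedDeriv 2 u x) + c * u x / x ^ 2) ^ 2 := by
  set v : ℝ → ℝ := deriv u with hv_def
  set w : ℝ → ℝ := deriv v with hw_def
  have huI : ContDiff ℝ (⊤ : ℕ∞) u := hu.of_le (by simp)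
  have hu' : Differentiable ℝ u := huI.differentiable (by simp)
  have hvC : ContDiff ℝ (⊤ : ℕ∞) v := (contDiff_infty_iff_deriv.mp huI).2
  have hv' : Differentiable ℝ v := hvC.differentiable (by simp)
  have hwC : ContDiff ℝ (⊤ : ℕ∞) w := (contDiff_infty_iff_deriv.mp hvC).2
  have hid2 : iteratedDeriv 2 u = w := by
    rw [iteratedDeriv_succ, iteratedDeriv_one, hw_def, hv_def]
  -- supports
  have htsv : tsupport v ⊆ tsupport u := closure_minimal (support_deriv_subset) (isClosed_tsupport u)
  have htsw : tsupport w ⊆ tsupport u :=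
    (closure_minimal (support_deriv_subset) (isClosed_tsupport v)).trans htsv
  obtain ⟨ε, hε, hεsub⟩ : ∃ ε > 0, tsupport u ⊆ Ici ε := by
    by_cases hne : (tsupport u).Nonempty
    · refine ⟨sInf (tsupport u), hsupp (hcs.sInf_mem hne), fun x hx => csInf_le hcs.bddBelow hx⟩
    · rw [not_nonempty_iff_eq_empty] at hne
      exact ⟨1, one_pos, by simp [hne]⟩
  have hu0 : ∀ x : ℝ, x < ε → u x = 0 := fun x hx =>
    image_eq_zero_of_notMem_tsupport (fun h => absurd (hεsub h) (not_le.mpr hx))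
  have hv0 : ∀ x : ℝ, x < ε → v x = 0 := fun x hx =>
    image_eq_zero_of_notMem_tsupport (fun h => absurd (hεsub (htsv h)) (not_le.mpr hx))
  have hw0 : ∀ x : ℝ, x < ε → w x = 0 := fun x hx =>
    image_eq_zero_of_notMem_tsupport (fun h => absurd (hεsub (htsw h)) (not_le.mpr hx))
  have hu0' : ∀ x : ℝ, x ∉ tsupport u → u x = 0 := fun x hx => image_eq_zero_of_notMem_tsupport hx
  have hv0' : ∀ x : ℝ, x ∉ tsupport u → v x = 0 := fun x hx =>
    image_eq_zero_of_notMem_tsupport (fun h => hx (htsv h))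
  have hw0' : ∀ x : ℝ, x ∉ tsupport u → w x = 0 := fun x hx =>
    image_eq_zero_of_notMem_tsupport (fun h => hx (htsw h))
  -- the five auxiliary functions
  set S : ℝ → ℝ := fun x => (c - 3/4)^2 * ((u x)^2 / x^4) with hS_def
  set H2 : ℝ → ℝ := fun x => (w x - 2 * v x / x + (9/4) * u x / x^2)^2 with hH2_def
  set H1 : ℝ → ℝ := fun x => (2*c + 5/2) * (v x / x - (3/2) * u x / x^2)^2 with hH1_def
  set D : ℝ → ℝ := fun x => 4 * w x * v x / x - (2*c + 9/2) * (w x * u x) / x^2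
      - (2*c + 13/2) * (v x)^2 / x^2 + (6*c + 33/2) * (u x * v x) / x^3
      - (3*c + 45/4) * (u x)^2 / x^4 with hD_def
  set G : ℝ → ℝ := fun x => 2 * (v x)^2 / x - (2*c + 9/2) * (u x * v x) / x^2
      + (c + 15/4) * (u x)^2 / x^3 with hG_def
  set F : ℝ → ℝ := fun x => (-(w x) + c * u x / x^2)^2 with hF_def
  set g : ℝ → ℝ := fun x => (u x)^2 / x^4 with hg_def
  -- continuity helper
  have cont_aux : ∀ f : ℝ → ℝ, (∀ x : ℝ, x ≠ 0 → ContinuousAt f x) →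
      (∀ x : ℝ, x < ε → f x = 0) → Continuous f := by
    intro f h1 h0
    rw [continuous_iff_continuousAt]
    intro x
    rcases ne_or_eq x 0 with h | h
    · exact h1 x h
    · subst h
      have hev : f =ᶠ[nhds (0:ℝ)] fun _ => 0 := by
        filter_upwards [Iio_mem_nhds hε] with y hy using h0 y hy
      exact (continuousAt_congr hev).mpr continuousAt_const
  have hcu : Continuous u := huI.continuous
  have hcv : Continuous v := hvC.continuous
  have hcw : Continuous w := hwC.continuous
  have contAt : ∀ (f : ℝ → ℝ) (n : ℕ), Continuous f → ∀ x : ℝ, x ≠ 0 →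
      ContinuousAt (fun y => f y / y ^ n) x := by
    intro f n hf x hx
    exact hf.continuousAt.div (continuousAt_pow _ _) (pow_ne_zero _ hx)
  -- continuity of each
  have hFc : Continuous F := by
    apply cont_aux
    · intro x hx
      exact ((hcw.continuousAt.neg.add ((continuousAt_const.mul hcu.continuousAt).div
        (continuousAt_pow _ _) (pow_ne_zero _ hx))).pow 2)
    · intro x hx; simp [hF_def, hu0 x hx, hw0 x hx]
  have hgc : Continuous g := by
    apply cont_aux
    · intro x hx
      exact (hcu.continuousAt.pow 2).div (continuousAt_pow _ _) (pow_ne_zero _ hx)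
    · intro x hx; simp [hg_def, hu0 x hx]
  have hSc : Continuous S := continuous_const.mul hgc
  have hH2c : Continuous H2 := by
    apply cont_aux
    · intro x hx
      exact ((hcw.continuousAt.sub ((continuous_const.mul hcv).continuousAt.div
        continuousAt_id hx)).add ((continuous_const.mul hcu).continuousAt.div
        (continuousAt_pow _ _) (pow_ne_zero _ hx))).pow 2
    · intro x hx; simp [hH2_def, hu0 x hx, hv0 x hx, hw0 x hx]
  have hH1c : Continuous H1 := by
    apply cont_aux
    · intro x hx
      exact continuousAt_const.mul (((hcv.continuousAt.div continuousAt_id hx).sub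
        ((continuous_const.mul hcu).continuousAt.div (continuousAt_pow _ _)
        (pow_ne_zero _ hx))).pow 2)
    · intro x hx; simp [hH1_def, hu0 x hx, hv0 x hx]
  have hDc : Continuous D := by
    apply cont_aux
    · intro x hx
      refine ContinuousAt.sub (ContinuousAt.add (ContinuousAt.sub (ContinuousAt.sub ?_ ?_) ?_) ?_) ?_
      · exact ((continuous_const.mul hcw).mul hcv).continuousAt.div continuousAt_id hx
      · exact (continuous_const.mul (hcw.mul hcu)).continuousAt.div (continuousAt_pow _ _) (pow_ne_zero _ hx)
      · exact (continuous_const.mul (hcv.pow 2)).continuousAt.div (continuousAt_pow _ _) (pow_ne_zero _ hx)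
      · exact (continuous_const.mul (hcu.mul hcv)).continuousAt.div (continuousAt_pow _ _) (pow_ne_zero _ hx)
      · exact (continuous_const.mul (hcu.pow 2)).continuousAt.div (continuousAt_pow _ _) (pow_ne_zero _ hx)
    · intro x hx; simp [hD_def, hu0 x hx, hv0 x hx, hw0 x hx]
  have hGc : Continuous G := by
    apply cont_aux
    · intro x hx
      exact (((continuous_const.mul (hcv.pow 2)).continuousAt.div continuousAt_id hx).sub
        ((continuous_const.mul (hcu.mul hcv)).continuousAt.div (continuousAt_pow _ _)
          (pow_ne_zero _ hx))).add
        ((continuous_const.mul (hcu.pow 2)).continuousAt.div (continuousAt_pow _ _)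
          (pow_ne_zero _ hx))
    · intro x hx; simp [hG_def, hu0 x hx, hv0 x hx]
  -- compact supports
  have hsupp_aux : ∀ f : ℝ → ℝ, (∀ x : ℝ, x ∉ tsupport u → f x = 0) → HasCompactSupport f := by
    intro f hf
    exact HasCompactSupport.of_support_subset_isCompact hcs fun x hx => by
      by_contra h; exact hx (hf x h)
  have hFcs : HasCompactSupport F := hsupp_aux F fun x hx => by
    simp [hF_def, hu0' x hx, hw0' x hx]
  have hgcs : HasCompactSupport g := hsupp_aux g fun x hx => by simp [hg_def, hu0' x hx]
  have hScs : HasCompactSupport S := hsupp_aux S fun x hx => by simp [hS_def, hu0' x hx]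
  have hH2cs : HasCompactSupport H2 := hsupp_aux H2 fun x hx => by
    simp [hH2_def, hu0' x hx, hv0' x hx, hw0' x hx]
  have hH1cs : HasCompactSupport H1 := hsupp_aux H1 fun x hx => by
    simp [hH1_def, hu0' x hx, hv0' x hx]
  have hDcs : HasCompactSupport D := hsupp_aux D fun x hx => by
    simp [hD_def, hu0' x hx, hv0' x hx, hw0' x hx]
  have hGcs : HasCompactSupport G := hsupp_aux G fun x hx => by
    simp [hG_def, hu0' x hx, hv0' x hx]
  -- integrability
  have hFi : IntegrableOn F (Ioi 0) := (hFc.integrable_of_hasCompactSupport hFcs).integrableOn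
  have hgi : IntegrableOn g (Ioi 0) := (hgc.integrable_of_hasCompactSupport hgcs).integrableOn
  have hSi : IntegrableOn S (Ioi 0) := (hSc.integrable_of_hasCompactSupport hScs).integrableOn
  have hH2i : IntegrableOn H2 (Ioi 0) := (hH2c.integrable_of_hasCompactSupport hH2cs).integrableOn
  have hH1i : IntegrableOn H1 (Ioi 0) := (hH1c.integrable_of_hasCompactSupport hH1cs).integrableOn
  have hDi : IntegrableOn D (Ioi 0) := (hDc.integrable_of_hasCompactSupport hDcs).integrableOn
  -- derivative of G
  have hGderiv : ∀ x ∈ Ioi (0:ℝ), HasDerivAt G (D x) x := by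
    intro x hx
    have hx0 : x ≠ 0 := ne_of_gt hx
    have hdu : HasDerivAt u (v x) x := (hu' x).hasDerivAt
    have hdv : HasDerivAt v (w x) x := (hv' x).hasDerivAt
    simp only [hG_def, hD_def]
    have h1 := ((hdv.pow 2).const_mul (2:ℝ)).div (hasDerivAt_id x) hx0
    have h2 := ((hdu.mul hdv).const_mul (2*c + 9/2)).div (hasDerivAt_pow 2 x) (pow_ne_zero 2 hx0)
    have h3 := ((hdu.pow 2).const_mul (c + 15/4)).div (hasDerivAt_pow 3 x) (pow_ne_zero 3 hx0)
    have h4 := (h1.sub h2).add h3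
    simp only [id_eq] at h4
    refine h4.congr_deriv ?_
    simp only [Pi.pow_apply, Pi.mul_apply]
    field_simp [hx0]
    ring
  -- ∫ D = 0
  have hDint : ∫ x in Ioi (0:ℝ), D x = 0 := by
    obtain ⟨M, hM⟩ := hcs.bddAbove
    have hGtop : Tendsto G atTop (nhds 0) := by
      apply Tendsto.congr' _ tendsto_const_nhds
      filter_upwards [eventually_gt_atTop M] with x hx
      have hxn : x ∉ tsupport u := fun h => absurd (hM h) (not_le.mpr hx)
      simp [hG_def, hu0' x hxn, hv0' x hxn]
    have := integral_Ioi_of_hasDerivAt_of_tendsto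
      (hGc.continuousWithinAt) hGderiv hDi hGtop
    rw [this, hG_def]
    simp [hu0 0 hε, hv0 0 hε]
  -- pointwise identity on Ioi 0
  have hpt : ∀ x ∈ Ioi (0:ℝ), F x = S x + H2 x + H1 x + D x := by
    intro x hx
    have hx0 : x ≠ 0 := ne_of_gt hx
    simp only [hF_def, hS_def, hH2_def, hH1_def, hD_def]
    field_simp
    ring
  -- combine integrals
  have hsplit : ∫ x in Ioi (0:ℝ), F x
      = (∫ x in Ioi (0:ℝ), S x) + (∫ x in Ioi (0:ℝ), H2 x)
        + (∫ x in Ioi (0:ℝ), H1 x) + (∫ x in Ioi (0:ℝ), D x) := by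
    rw [setIntegral_congr_fun measurableSet_Ioi hpt,
      integral_add (f := fun x => S x + H2 x + H1 x) (g := D) ((hSi.add hH2i).add hH1i) hDi,
      integral_add (f := fun x => S x + H2 x) (g := H1) (hSi.add hH2i) hH1i,
      integral_add (f := S) (g := H2) hSi hH2i]
  have hH2nn : 0 ≤ ∫ x in Ioi (0:ℝ), H2 x :=
    setIntegral_nonneg measurableSet_Ioi fun x _ => sq_nonneg _
  have hH1nn : 0 ≤ ∫ x in Ioi (0:ℝ), H1 x :=
    setIntegral_nonneg measurableSet_Ioi fun x _ =>
      mul_nonneg (by linarith) (sq_nonneg _)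
  have hSval : ∫ x in Ioi (0:ℝ), S x = (c - 3/4)^2 * ∫ x in Ioi (0:ℝ), g x := by
    rw [hS_def, integral_const_mul]
  have key : (c - 3/4)^2 * (∫ x in Ioi (0:ℝ), g x) ≤ ∫ x in Ioi (0:ℝ), F x := by
    rw [hsplit, hSval, hDint]
    linarith
  have hconst : c ^ 2 - (3/2) * c + 9/16 = (c - 3/4)^2 := by ring
  calc (c ^ 2 - (3 / 2) * c + 9 / 16) * ∫ x in Set.Ioi (0 : ℝ), (u x) ^ 2 / x ^ 4
      = (c - 3/4)^2 * ∫ x in Ioi (0:ℝ), g x := by rw [hconst]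
    _ ≤ ∫ x in Ioi (0:ℝ), F x := key
    _ = ∫ x in Set.Ioi (0 : ℝ), (-(iteratedDeriv 2 u x) + c * u x / x ^ 2) ^ 2 := by
        rw [hid2]
end

section
/- Let b > 0, β ≥ 0, f₁(x) = x^β and f₂(x) = x^{α+β+1} for α ≥ 0. If u ∈ H²(b, b+1) is nonzero and satisfies ∫_b^{b+1} u(x)x^β dx = 0 and ∫_b^{b+1} (u(x)/x^β)' x^α dx = 0, then f₁, f₂, u are linearly independent in L²(b, b+1). -/
open Real MeasureTheory Set intervalIntegral

/-! If `c₁ x^β + c₂ x^(α+β+1) + c₃ u = 0`, then `c₃ (u / x^β)' = -c₂ (α+1) x^α`, so `c₃` times the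
second constraint reads `c₂ (α+1) ∫ x^(2α) = 0` and forces `c₂ = 0`. Then `c₃` times the first
constraint reads `c₁ ∫ x^(2β) = 0`, so `c₁ = 0`, and `c₃ u = 0` with `u ≠ 0` gives `c₃ = 0`. -/

theorem integral_rpow_pos {a b : ℝ} (ha : 0 < a) (hab : a < b) (p : ℝ) :
    0 < ∫ x in a..b, x ^ p := by
  refine intervalIntegral_pos_of_pos_on ?_ (fun x hx => rpow_pos_of_pos (ha.trans hx.1) p) hab
  refine ContinuousOn.intervalIntegrable fun x hx => ?_
  rw [uIcc_of_le hab.le] at hx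
  exact (continuousAt_id.rpow_const (Or.inl (ha.trans_le hx.1).ne')).continuousWithinAt

section

variable {α β c₁ c₂ c₃ a b : ℝ} {u : ℝ → ℝ}

theorem mul_deriv_div_rpow_of_relation (ha : 0 < a)
    (h : ∀ t ∈ Ioo a b, c₁ * t ^ β + c₂ * t ^ (α + β + 1) + c₃ * u t = 0)
    {x : ℝ} (hx : x ∈ Ioo a b) :
    c₃ * deriv (fun t => u t / t ^ β) x = -(c₂ * (α + 1)) * x ^ α := by
  have hquot : (fun t => c₃ * (u t / t ^ β)) =ᶠ[nhds x] fun t => -c₁ - c₂ * t ^ (α + 1) := by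
    filter_upwards [isOpen_Ioo.mem_nhds hx] with t ht
    have ht0 : 0 < t := ha.trans ht.1
    have := h t ht
    rw [show α + β + 1 = (α + 1) + β by ring, rpow_add ht0] at this
    field_simp [(rpow_pos_of_pos ht0 β).ne']
    linarith
  have hpow : HasDerivAt (fun t => t ^ (α + 1)) ((α + 1) * x ^ α) x := by
    simpa using hasDerivAt_rpow_const (p := α + 1) (Or.inl (ha.trans hx.1).ne')
  -- `deriv_const_mul_field` needs no differentiability of `u / t ^ β` (which can fail only if `c₃ = 0`).
  rw [← deriv_const_mul_field, hquot.deriv_eq, ((hpow.const_mul c₂).const_sub (-c₁)).deriv]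
  ring

theorem mul_integral_deriv_div_rpow_mul_rpow_of_relation (ha : 0 < a) (hab : a ≤ b)
    (h : ∀ t ∈ Ioo a b, c₁ * t ^ β + c₂ * t ^ (α + β + 1) + c₃ * u t = 0) :
    c₃ * ∫ x in a..b, deriv (fun t => u t / t ^ β) x * x ^ α =
      -(c₂ * (α + 1)) * ∫ x in a..b, x ^ (α + α) := by
  rw [← intervalIntegral.integral_const_mul, ← intervalIntegral.integral_const_mul]
  refine integral_congr_Ioo_of_le hab fun x hx => ?_
  rw [← mul_assoc, mul_deriv_div_rpow_of_relation ha h hx, mul_assoc, ← rpow_add (ha.trans hx.1)]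

theorem mul_integral_mul_rpow_of_relation (ha : 0 < a) (hab : a ≤ b)
    (h : ∀ t ∈ Icc a b, c₁ * t ^ β + c₃ * u t = 0) :
    c₃ * ∫ x in a..b, u x * x ^ β = -c₁ * ∫ x in a..b, x ^ (β + β) := by
  rw [← intervalIntegral.integral_const_mul, ← intervalIntegral.integral_const_mul]
  refine integral_congr fun x hx => ?_
  rw [uIcc_of_le hab] at hx
  rw [rpow_add (ha.trans_le hx.1)]
  linear_combination x ^ β * h x hx

end

theorem linear_independence_of_constraints_general
    (α β b : ℝ) (hα : 0 ≤ α) (hb : 0 < b)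
    (u : ℝ → ℝ)
    (hne : ¬ ∀ x ∈ Set.Icc b (b + 1), u x = 0)
    (hcond1 : ∫ x in b..(b + 1), u x * x ^ β = 0)
    (hcond2 : ∫ x in b..(b + 1), deriv (fun t : ℝ => u t / t ^ β) x * x ^ α = 0) :
    ∀ c₁ c₂ c₃ : ℝ,
      (∀ x ∈ Set.Icc b (b + 1),
        c₁ * x ^ β + c₂ * x ^ (α + β + 1) + c₃ * u x = 0) →
      c₁ = 0 ∧ c₂ = 0 ∧ c₃ = 0 := by
  intro c₁ c₂ c₃ h
  have hlt : b < b + 1 := lt_add_one b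
  have hc₂ : c₂ = 0 := by
    have := mul_integral_deriv_div_rpow_mul_rpow_of_relation hb hlt.le
      fun t ht => h t (Ioo_subset_Icc_self ht)
    rw [hcond2, mul_zero, eq_comm] at this
    simpa [(integral_rpow_pos hb hlt _).ne', (by linarith : α + 1 ≠ 0)] using this
  have hc₁ : c₁ = 0 := by
    have := mul_integral_mul_rpow_of_relation hb hlt.le fun t ht => by simpa [hc₂] using h t ht
    rw [hcond1, mul_zero, eq_comm] at this
    simpa [(integral_rpow_pos hb hlt _).ne'] using this
  refine ⟨hc₁, hc₂, by_contra fun hc₃ => hne fun x hx => ?_⟩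
  simpa [hc₁, hc₂, hc₃] using h x hx

/-- If a nonzero `u ∈ H²(b,b+1)` satisfies the two integral constraints, then
`f₁(x) = x^β`, `f₂(x) = x^{α+β+1}` and `u` are linearly independent on `(b,b+1)`. -/
theorem linear_independence_of_constraints
    (α β b : ℝ) (hα : 0 ≤ α) (hβ : 0 ≤ β) (hb : 0 < b)
    (u : ℝ → ℝ) (hu : ContDiffOn ℝ 2 u (Set.Icc b (b + 1)))
    (hne : ¬ ∀ x ∈ Set.Icc b (b + 1), u x = 0)
    (hcond1 : ∫ x in b..(b + 1), u x * x ^ β = 0)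
    (hcond2 : ∫ x in b..(b + 1), deriv (fun t : ℝ => u t / t ^ β) x * x ^ α = 0) :
    ∀ c₁ c₂ c₃ : ℝ,
      (∀ x ∈ Set.Icc b (b + 1),
        c₁ * x ^ β + c₂ * x ^ (α + β + 1) + c₃ * u x = 0) →
      c₁ = 0 ∧ c₂ = 0 ∧ c₃ = 0 :=
  linear_independence_of_constraints_general α β b hα hb u hne hcond1 hcond2
end

section
/- Let α ≥ 0, 0 ≤ β < 3/2 + α, and 0 ≤ ν < 3 with ν ≤ 2β. There exists a constant C > 0 such that for every b > 0 and every u ∈ H²(b, b+1) satisfying ∫_b^{b+1} u(x)x^β dx = 0 and ∫_b^{b+1}(u(x)/x^β)' x^α dx = 0, one has sup_{b ≤ y ≤ b+1} |u(y)|²/y^ν ≤ C · ∫_b^{b+1} |(x^{−α}(u(x)/x^β)')'|² x^{2(α+β)} dx. -/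
/-!
Write `v = u / x ^ β`, `w = x ^ (-α) v'`, `g = w'` and `D² = ∫ g² x ^ (2(α+β))`. The two
constraints say that `w` and `v` have mean zero for the weights `x ^ (2α)` and `x ^ (2β)`, so each
is bounded by its weighted mean oscillation. Cauchy–Schwarz gives
`|w x - w z| ≤ D (∫_z^x σ ^ (-2(α+β)))^{1/2}`, and `|v y - v t| ≤ |∫_t^y w s s ^ α|`.

For `b ≥ 1` every power of `x` is comparable to the same power of `b`, which gives
`|w| ≤ D b ^ (-(α+β))` and `|v| ≤ 2 ^ α D b ^ (-β)`. For `b < 1` the singularity at `0` has to be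
tracked: `|w s| ≲ D s ^ (-e)` and then `|v y| ≲ D y ^ (ν/2 - β)`, where `e` must lie in
`(α + β - 1/2, min (2α + 1) (α + β + 1 - ν/2))` for the weighted power integrals involved to be
bounded near `0`. This interval is nonempty exactly because `β < 3/2 + α` and `ν < 3`.
-/

open Real MeasureTheory Set intervalIntegral

theorem continuousOn_rpow_const_Icc {a c : ℝ} (ha : 0 < a) (q : ℝ) :
    ContinuousOn (fun x : ℝ => x ^ q) (Icc a c) :=
  continuousOn_id.rpow_const fun _ hx => Or.inl (ha.trans_le hx.1).ne'

theorem contDiffOn_rpow_const_Icc {a c : ℝ} (ha : 0 < a) (q : ℝ) {n : WithTop ℕ∞} :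
    ContDiffOn ℝ n (fun x : ℝ => x ^ q) (Icc a c) :=
  fun _ hx => (contDiffAt_rpow_const_of_ne (ha.trans_le hx.1).ne').contDiffWithinAt

theorem integral_derivWithin_Icc_eq_sub {f : ℝ → ℝ} {a c t y : ℝ}
    (hf : ContDiffOn ℝ 1 f (Icc a c)) (ht : t ∈ Icc a c) (hy : y ∈ Icc a c) :
    ∫ s in t..y, derivWithin f (Icc a c) s = f y - f t := by
  rw [← integral_deriv_of_contDiffOn_uIcc (hf.mono (uIcc_subset_Icc ht hy))]
  refine integral_congr_uIoo fun s hs => ?_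
  have hs' : s ∈ Ioo a c := Ioo_subset_Ioo (le_min ht.1 hy.1) (max_le ht.2 hy.2) hs
  exact derivWithin_of_mem_nhds (Icc_mem_nhds hs'.1 hs'.2)

theorem abs_integral_le_sqrt_mul_sqrt {f ρ : ℝ → ℝ} {a c : ℝ} (hac : a ≤ c)
    (hf : ContinuousOn f (Icc a c)) (hρ : ContinuousOn ρ (Icc a c))
    (hρ0 : ∀ x ∈ Icc a c, 0 < ρ x) :
    |∫ x in a..c, f x| ≤ √(∫ x in a..c, f x ^ 2 * ρ x) * √(∫ x in a..c, (ρ x)⁻¹) := by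
  have hsqrt : ContinuousOn (fun x => √(ρ x)) (Icc a c) := hρ.sqrt
  have hF : ContinuousOn (fun x => f x * √(ρ x)) (Icc a c) := hf.mul hsqrt
  have hG : ContinuousOn (fun x => (√(ρ x))⁻¹) (Icc a c) :=
    hsqrt.inv₀ fun x hx => (Real.sqrt_pos.2 (hρ0 x hx)).ne'
  have memLp_two {h : ℝ → ℝ} (hh : ContinuousOn h (Icc a c)) :
      MemLp h (ENNReal.ofReal 2) (volume.restrict (Ioc a c)) := by
    rw [ENNReal.ofReal_ofNat, memLp_two_iff_integrable_sq
      ((hh.mono Ioc_subset_Icc_self).aestronglyMeasurable measurableSet_Ioc)]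
    exact ((hh.pow 2).integrableOn_Icc).mono_set Ioc_subset_Icc_self
  have hcs := integral_mul_norm_le_Lp_mul_Lq Real.HolderConjugate.two_two (memLp_two hF)
    (memLp_two hG)
  rw [integral_of_le hac, integral_of_le hac, integral_of_le hac]
  refine (MeasureTheory.abs_integral_le_integral_abs).trans (le_of_eq_of_le ?_ (hcs.trans_eq ?_))
  · refine setIntegral_congr_fun measurableSet_Ioc fun x hx => ?_
    have := (Real.sqrt_pos.2 (hρ0 x (Ioc_subset_Icc_self hx))).ne'
    simp only [norm_mul, norm_inv, Real.norm_eq_abs, abs_of_nonneg (Real.sqrt_nonneg _)]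
    field_simp
  · rw [Real.sqrt_eq_rpow, Real.sqrt_eq_rpow, one_div]
    congr 2 <;> refine setIntegral_congr_fun measurableSet_Ioc fun x hx => ?_
    · have := (hρ0 x (Ioc_subset_Icc_self hx)).le
      simp [mul_pow, Real.sq_sqrt this]
    · have := (hρ0 x (Ioc_subset_Icc_self hx)).le
      simp [inv_pow, Real.sq_sqrt this]

theorem abs_mul_integral_le_of_integral_mul_eq_zero {f ρ K : ℝ → ℝ} {a c s : ℝ} (hac : a ≤ c)
    (hf : ContinuousOn f (Icc a c)) (hρ : ContinuousOn ρ (Icc a c))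
    (hK : ContinuousOn K (Icc a c)) (hρ0 : ∀ x ∈ Icc a c, 0 ≤ ρ x)
    (hmean : ∫ x in a..c, f x * ρ x = 0) (hfK : ∀ x ∈ Icc a c, |f s - f x| ≤ K x) :
    |f s| * ∫ x in a..c, ρ x ≤ ∫ x in a..c, K x * ρ x := by
  rw [← uIcc_of_le hac] at hf hρ hK
  have hshift : f s * ∫ x in a..c, ρ x = ∫ x in a..c, (f s - f x) * ρ x := by
    simp only [sub_mul]
    rw [intervalIntegral.integral_sub (f := fun x => f s * ρ x) (g := fun x => f x * ρ x)
      ((continuousOn_const.mul hρ).intervalIntegrable) ((hf.mul hρ).intervalIntegrable),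
      hmean, sub_zero, intervalIntegral.integral_const_mul]
  calc |f s| * ∫ x in a..c, ρ x
      = |∫ x in a..c, (f s - f x) * ρ x| := by
        rw [← hshift, abs_mul, abs_of_nonneg (integral_nonneg hac hρ0)]
    _ ≤ ∫ x in a..c, |(f s - f x) * ρ x| := abs_integral_le_integral_abs hac
    _ ≤ ∫ x in a..c, K x * ρ x := by
        refine integral_mono_on hac (((continuousOn_const.sub hf).mul hρ).abs.intervalIntegrable)
          ((hK.mul hρ).intervalIntegrable) fun x hx => ?_
        rw [abs_mul, abs_of_nonneg (hρ0 x hx)]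
        exact mul_le_mul_of_nonneg_right (hfK x hx) (hρ0 x hx)

theorem abs_le_of_integral_mul_eq_zero {f ρ : ℝ → ℝ} {a c s K : ℝ} (hac : a ≤ c)
    (hf : ContinuousOn f (Icc a c)) (hρ : ContinuousOn ρ (Icc a c))
    (hρ0 : ∀ x ∈ Icc a c, 0 ≤ ρ x) (hρpos : 0 < ∫ x in a..c, ρ x)
    (hmean : ∫ x in a..c, f x * ρ x = 0) (hfK : ∀ x ∈ Icc a c, |f s - f x| ≤ K) :
    |f s| ≤ K := by
  have h := abs_mul_integral_le_of_integral_mul_eq_zero hac hf hρ continuousOn_const hρ0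
    hmean hfK
  rw [intervalIntegral.integral_const_mul] at h
  exact le_of_mul_le_mul_right h hρpos

theorem abs_le_of_integral_mul_eq_zero_of_abs_sub_le_add {f ρ φ : ℝ → ℝ} {a c s A : ℝ}
    (hac : a ≤ c) (hf : ContinuousOn f (Icc a c)) (hρ : ContinuousOn ρ (Icc a c))
    (hφ : ContinuousOn φ (Icc a c)) (hρ0 : ∀ x ∈ Icc a c, 0 ≤ ρ x)
    (hρpos : 0 < ∫ x in a..c, ρ x) (hmean : ∫ x in a..c, f x * ρ x = 0)
    (hfφ : ∀ x ∈ Icc a c, |f s - f x| ≤ A * (φ s + φ x)) :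
    |f s| ≤ A * (φ s + (∫ x in a..c, φ x * ρ x) / ∫ x in a..c, ρ x) := by
  have h := abs_mul_integral_le_of_integral_mul_eq_zero hac hf hρ
    (K := fun x => A * (φ s + φ x)) (continuousOn_const.mul (continuousOn_const.add hφ)) hρ0
    hmean hfφ
  rw [← uIcc_of_le hac] at hρ hφ
  have hsplit : ∫ x in a..c, A * (φ s + φ x) * ρ x
      = A * (φ s * ∫ x in a..c, ρ x) + A * ∫ x in a..c, φ x * ρ x := by
    simp only [mul_add, add_mul, mul_assoc]
    rw [intervalIntegral.integral_add (f := fun x => A * (φ s * ρ x))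
        (g := fun x => A * (φ x * ρ x))
        ((continuousOn_const.mul (continuousOn_const.mul hρ)).intervalIntegrable)
        ((continuousOn_const.mul (hφ.mul hρ)).intervalIntegrable),
      intervalIntegral.integral_const_mul, intervalIntegral.integral_const_mul,
      intervalIntegral.integral_const_mul]
  rw [hsplit, ← le_div_iff₀ hρpos] at h
  exact h.trans_eq (by field_simp)

theorem integral_rpow_le_of_neg_one_lt {r z x : ℝ} (hr : -1 < r) (hz : 0 ≤ z) :
    ∫ σ in z..x, σ ^ r ≤ x ^ (r + 1) / (r + 1) := by
  rw [integral_rpow (Or.inl hr)]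
  gcongr
  · linarith
  · exact sub_le_self _ (rpow_nonneg hz _)

theorem integral_rpow_le_mul_rpow_neg {r E z x M : ℝ} (hE : 0 ≤ E) (hrE : 0 < r + 1 + E)
    (hz : 0 < z) (hzx : z ≤ x) (hxM : x ≤ M) :
    ∫ σ in z..x, σ ^ r ≤ M ^ (r + 1 + E) / (r + 1 + E) * z ^ (-E) := by
  have hcont (p : ℝ) : ContinuousOn (fun σ : ℝ => σ ^ p) (uIcc z x) :=
    uIcc_of_le hzx ▸ continuousOn_rpow_const_Icc hz p
  calc ∫ σ in z..x, σ ^ r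
      ≤ ∫ σ in z..x, σ ^ (r + E) * z ^ (-E) := by
        refine integral_mono_on hzx (hcont r).intervalIntegrable
          ((hcont _).mul continuousOn_const).intervalIntegrable fun σ hσ => ?_
        have hσ0 : 0 < σ := hz.trans_le hσ.1
        calc σ ^ r = σ ^ (r + E) * σ ^ (-E) := by rw [← rpow_add hσ0]; ring_nf
          _ ≤ σ ^ (r + E) * z ^ (-E) := mul_le_mul_of_nonneg_left
            (rpow_le_rpow_of_nonpos hz hσ.1 (neg_nonpos.2 hE)) (rpow_nonneg hσ0.le _)
    _ ≤ M ^ (r + 1 + E) / (r + 1 + E) * z ^ (-E) := by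
        rw [intervalIntegral.integral_mul_const, add_right_comm]
        gcongr
        exact (integral_rpow_le_of_neg_one_lt (by linarith) hz.le).trans
          (div_le_div_of_nonneg_right (rpow_le_rpow (hz.le.trans hzx) hxM (by linarith))
            (by linarith))

theorem inv_add_one_le_integral_rpow {p b : ℝ} (hp : 0 ≤ p) (hb : 0 ≤ b) :
    (p + 1)⁻¹ ≤ ∫ x in b..b + 1, x ^ p := by
  rw [integral_rpow (Or.inl (by linarith)), div_eq_mul_inv]
  refine le_mul_of_one_le_left (by positivity) ?_
  have := Real.add_rpow_le_rpow_add hb zero_le_one (by linarith : 1 ≤ p + 1)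
  rw [one_rpow] at this
  linarith

theorem integral_rpow_neg_mul_rpow_le {p e b : ℝ} (hb : 0 < b) (hb1 : b < 1) (hpe : -1 < p - e) :
    ∫ x in b..b + 1, x ^ (-e) * x ^ p ≤ 2 ^ (p - e + 1) / (p - e + 1) := by
  rw [integral_congr_Ioo_of_le (by linarith) fun x hx => by
    rw [← rpow_add (hb.trans hx.1), neg_add_eq_sub]]
  exact (integral_rpow_le_of_neg_one_lt hpe hb.le).trans <| div_le_div_of_nonneg_right
    (rpow_le_rpow (by linarith) (by linarith) (by linarith)) (by linarith)

theorem exists_abs_le_mul_rpow_of_integral_mul_rpow_eq_zero {p e : ℝ} (hp : 0 ≤ p) (he : 0 ≤ e)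
    (hpe : -1 < p - e) :
    ∃ K > 0, ∀ b, 0 < b → b < 1 → ∀ f : ℝ → ℝ, ContinuousOn f (Icc b (b + 1)) →
      ∫ x in b..b + 1, f x * x ^ p = 0 → ∀ A : ℝ,
      (∀ s ∈ Icc b (b + 1), ∀ t ∈ Icc b (b + 1), s ≤ t → |f t - f s| ≤ A * s ^ (-e)) →
      ∀ s ∈ Icc b (b + 1), |f s| ≤ K * A * s ^ (-e) := by
  have hpe1 : 0 < p - e + 1 := by linarith
  set c : ℝ := 2 ^ (p - e + 1) / (p - e + 1)
  have hc : 0 < c := div_pos (rpow_pos_of_pos two_pos _) hpe1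
  refine ⟨1 + c * (p + 1) * 2 ^ e, by positivity, fun b hb hb1 f hf hmean A hosc s hs => ?_⟩
  have hpos : ∀ x ∈ Icc b (b + 1), 0 < x := fun x hx => hb.trans_le hx.1
  have hs0 := hpos s hs
  have hA : 0 ≤ A := by
    have := hosc s hs s hs le_rfl
    rw [sub_self, abs_zero] at this
    exact nonneg_of_mul_nonneg_left this (rpow_pos_of_pos hs0 _)
  have hM : (p + 1)⁻¹ ≤ ∫ x in b..b + 1, x ^ p := inv_add_one_le_integral_rpow hp hb.le
  have hM0 : 0 < ∫ x in b..b + 1, x ^ p := lt_of_lt_of_le (by positivity) hM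
  have h2e : 1 ≤ 2 ^ e * s ^ (-e) := by
    calc (1 : ℝ) = 2 ^ e * 2 ^ (-e) := by rw [← rpow_add two_pos, add_neg_cancel, rpow_zero]
      _ ≤ 2 ^ e * s ^ (-e) := mul_le_mul_of_nonneg_left
        (rpow_le_rpow_of_nonpos hs0 (by linarith [hs.2]) (neg_nonpos.2 he)) (by positivity)
  have hsym : ∀ x ∈ Icc b (b + 1), |f s - f x| ≤ A * (s ^ (-e) + x ^ (-e)) := by
    intro x hx
    rcases le_total s x with h | h
    · rw [abs_sub_comm]
      exact (hosc s hs x hx h).trans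
        (by gcongr; exact le_add_of_nonneg_right (rpow_nonneg (hpos x hx).le _))
    · exact (hosc x hx s hs h).trans
        (by gcongr; exact le_add_of_nonneg_left (rpow_nonneg hs0.le _))
  calc |f s| ≤ A * (s ^ (-e) + (∫ x in b..b + 1, x ^ (-e) * x ^ p) / ∫ x in b..b + 1, x ^ p) :=
        abs_le_of_integral_mul_eq_zero_of_abs_sub_le_add (by linarith) hf
          (continuousOn_rpow_const_Icc hb p) (continuousOn_rpow_const_Icc hb (-e))
          (fun x hx => rpow_nonneg (hpos x hx).le p) hM0 hmean hsym
    _ ≤ A * (s ^ (-e) + c / (p + 1)⁻¹ * (2 ^ e * s ^ (-e))) := by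
        gcongr
        calc _ ≤ c / (p + 1)⁻¹ :=
              div_le_div₀ hc.le (integral_rpow_neg_mul_rpow_le hb hb1 hpe) (by positivity) hM
          _ ≤ c / (p + 1)⁻¹ * (2 ^ e * s ^ (-e)) := le_mul_of_one_le_right (by positivity) h2e
    _ = (1 + c * (p + 1) * 2 ^ e) * A * s ^ (-e) := by rw [div_inv_eq_mul]; ring

noncomputable def weightedEnergy (γ b : ℝ) (g : ℝ → ℝ) : ℝ :=
  ∫ x in b..b + 1, g x ^ 2 * x ^ (2 * γ)

/-- The relations `v' = x ^ α w` and `w' = g` on `[b, b + 1]`, in integrated form so that no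
differentiability at the endpoints is needed. -/
structure WeightedDerivChain (α b : ℝ) (v w g : ℝ → ℝ) : Prop where
  continuousOn_v : ContinuousOn v (Icc b (b + 1))
  continuousOn_w : ContinuousOn w (Icc b (b + 1))
  continuousOn_g : ContinuousOn g (Icc b (b + 1))
  sub_v : ∀ t ∈ Icc b (b + 1), ∀ y ∈ Icc b (b + 1), v y - v t = ∫ s in t..y, w s * s ^ α
  sub_w : ∀ z ∈ Icc b (b + 1), ∀ x ∈ Icc b (b + 1), w x - w z = ∫ s in z..x, g s

theorem weightedDerivChain_of_contDiffOn {α b : ℝ} {v : ℝ → ℝ} (hb : 0 < b)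
    (hv : ContDiffOn ℝ 2 v (Icc b (b + 1))) :
    WeightedDerivChain α b v (fun s => derivWithin v (Icc b (b + 1)) s / s ^ α)
      (derivWithin (fun s => derivWithin v (Icc b (b + 1)) s / s ^ α) (Icc b (b + 1))) := by
  have hI : UniqueDiffOn ℝ (Icc b (b + 1)) := uniqueDiffOn_Icc (by linarith)
  have hpos : ∀ x ∈ Icc b (b + 1), 0 < x := fun x hx => hb.trans_le hx.1
  have hw : ContDiffOn ℝ 1 (fun s => derivWithin v (Icc b (b + 1)) s / s ^ α) (Icc b (b + 1)) :=
    (hv.derivWithin hI (by norm_num)).div (contDiffOn_rpow_const_Icc hb α)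
      fun x hx => (rpow_pos_of_pos (hpos x hx) _).ne'
  refine ⟨hv.continuousOn, hw.continuousOn, hw.continuousOn_derivWithin hI le_rfl,
    fun t ht y hy => ?_, fun z hz x hx => (integral_derivWithin_Icc_eq_sub hw hz hx).symm⟩
  rw [← integral_derivWithin_Icc_eq_sub (hv.of_le one_le_two) ht hy]
  refine integral_congr fun s hs => ?_
  exact (div_mul_cancel₀ _ (rpow_pos_of_pos (hpos s (uIcc_subset_Icc ht hy hs)) _).ne').symm

namespace WeightedDerivChain

variable {α β b : ℝ} {v w g : ℝ → ℝ}

theorem abs_sub_w_le (h : WeightedDerivChain α b v w g) (hb : 0 < b) (γ : ℝ) {z x : ℝ}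
    (hz : z ∈ Icc b (b + 1)) (hx : x ∈ Icc b (b + 1)) (hzx : z ≤ x) :
    |w x - w z| ≤ √(weightedEnergy γ b g) * √(∫ s in z..x, s ^ (-(2 * γ))) := by
  have hsub : Icc z x ⊆ Icc b (b + 1) := Icc_subset_Icc hz.1 hx.2
  have hpos : ∀ s ∈ Icc b (b + 1), 0 < s := fun s hs => hb.trans_le hs.1
  rw [h.sub_w z hz x hx]
  refine (abs_integral_le_sqrt_mul_sqrt hzx (h.continuousOn_g.mono hsub)
    ((continuousOn_rpow_const_Icc hb (2 * γ)).mono hsub) fun s hs => rpow_pos_of_pos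
      (hpos s (hsub hs)) _).trans ?_
  gcongr √?_ * √?_
  · refine integral_mono_interval hz.1 hzx hx.2 ?_ ?_
    · filter_upwards [ae_restrict_mem measurableSet_Ioc] with s hs
      exact mul_nonneg (sq_nonneg _) (rpow_nonneg (hb.trans hs.1).le _)
    · exact ((h.continuousOn_g.pow 2).mul
        (continuousOn_rpow_const_Icc hb _)).intervalIntegrable_of_Icc (by linarith)
  · refine le_of_eq (integral_congr fun s hs => ?_)
    rw [uIcc_of_le hzx] at hs
    exact (rpow_neg (hpos s (hsub hs)).le _).symm

theorem abs_w_le_of_one_le (h : WeightedDerivChain α b v w g) (hb : 1 ≤ b)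
    (hw0 : ∫ x in b..b + 1, w x * x ^ (2 * α) = 0) (hα : 0 ≤ α) (hβ : 0 ≤ β) {s : ℝ}
    (hs : s ∈ Icc b (b + 1)) :
    |w s| ≤ √(weightedEnergy (α + β) b g) * b ^ (-(α + β)) := by
  have hb0 : 0 < b := by linarith
  have hsq : √(b ^ (-(2 * (α + β)))) = b ^ (-(α + β)) := by
    rw [show -(2 * (α + β)) = -(α + β) * 2 by ring, rpow_mul hb0.le, rpow_two,
      sqrt_sq (rpow_nonneg hb0.le _)]
  have hosc : ∀ z ∈ Icc b (b + 1), ∀ x ∈ Icc b (b + 1), z ≤ x →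
      |w x - w z| ≤ √(weightedEnergy (α + β) b g) * b ^ (-(α + β)) := by
    intro z hz x hx hzx
    refine (h.abs_sub_w_le hb0 (α + β) hz hx hzx).trans
      (mul_le_mul_of_nonneg_left ?_ (sqrt_nonneg _))
    rw [← hsq]
    refine sqrt_le_sqrt ((le_abs_self _).trans ?_)
    calc |∫ σ in z..x, σ ^ (-(2 * (α + β)))| ≤ b ^ (-(2 * (α + β))) * |x - z| := by
          rw [← Real.norm_eq_abs]
          refine intervalIntegral.norm_integral_le_of_norm_le_const fun σ hσ => ?_
          rw [uIoc_of_le hzx] at hσ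
          have hbσ : b ≤ σ := hz.1.trans hσ.1.le
          rw [norm_of_nonneg (rpow_nonneg (hb0.trans_le hbσ).le _)]
          exact rpow_le_rpow_of_nonpos hb0 hbσ (by linarith)
      _ ≤ b ^ (-(2 * (α + β))) := by
          refine mul_le_of_le_one_right (rpow_nonneg hb0.le _) ?_
          rw [abs_of_nonneg (by linarith)]
          linarith [hx.2, hz.1]
  refine abs_le_of_integral_mul_eq_zero (by linarith) h.continuousOn_w
    (continuousOn_rpow_const_Icc hb0 _) (fun x hx => rpow_nonneg (hb0.trans_le hx.1).le _)
    ((inv_pos.2 (by linarith)).trans_le (inv_add_one_le_integral_rpow (by positivity) hb0.le))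
    hw0 fun x hx => ?_
  rcases le_total s x with hsx | hxs
  · rw [abs_sub_comm]
    exact hosc s hs x hx hsx
  · exact hosc x hx s hs hxs

theorem abs_v_le_of_one_le (h : WeightedDerivChain α b v w g) (hb : 1 ≤ b)
    (hv0 : ∫ x in b..b + 1, v x * x ^ (2 * β) = 0) (hw0 : ∫ x in b..b + 1, w x * x ^ (2 * α) = 0)
    (hα : 0 ≤ α) (hβ : 0 ≤ β) {y : ℝ} (hy : y ∈ Icc b (b + 1)) :
    |v y| ≤ 2 ^ α * √(weightedEnergy (α + β) b g) * b ^ (-β) := by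
  have hb0 : 0 < b := by linarith
  refine abs_le_of_integral_mul_eq_zero (by linarith) h.continuousOn_v
    (continuousOn_rpow_const_Icc hb0 _) (fun x hx => rpow_nonneg (hb0.trans_le hx.1).le _)
    ((inv_pos.2 (by linarith)).trans_le (inv_add_one_le_integral_rpow (by positivity) hb0.le))
    hv0 fun t ht => ?_
  rw [h.sub_v t ht y hy, ← Real.norm_eq_abs]
  refine (intervalIntegral.norm_integral_le_of_norm_le_const fun s hs => ?_).trans
    (mul_le_of_le_one_right (by positivity) (abs_le.2 ⟨?_, ?_⟩))
  · have hs : s ∈ Icc b (b + 1) := uIcc_subset_Icc ht hy (uIoc_subset_uIcc hs)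
    have hs0 : 0 < s := hb0.trans_le hs.1
    rw [norm_mul, norm_of_nonneg (rpow_nonneg hs0.le _), Real.norm_eq_abs]
    calc |w s| * s ^ α
        ≤ √(weightedEnergy (α + β) b g) * b ^ (-(α + β)) * (2 * b) ^ α :=
          mul_le_mul (h.abs_w_le_of_one_le hb hw0 hα hβ hs)
            (rpow_le_rpow hs0.le (by linarith [hs.2]) hα) (rpow_nonneg hs0.le _) (by positivity)
      _ = 2 ^ α * √(weightedEnergy (α + β) b g) * b ^ (-β) := by
          rw [mul_rpow zero_le_two hb0.le, rpow_neg hb0.le, rpow_neg hb0.le, rpow_add hb0]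
          field_simp
  all_goals linarith [hy.1, hy.2, ht.1, ht.2]

theorem abs_v_le_rpow_of_one_le (h : WeightedDerivChain α b v w g) {ν : ℝ} (hb : 1 ≤ b)
    (hv0 : ∫ x in b..b + 1, v x * x ^ (2 * β) = 0) (hw0 : ∫ x in b..b + 1, w x * x ^ (2 * α) = 0)
    (hα : 0 ≤ α) (hβ : 0 ≤ β) (hν : 0 ≤ ν) {y : ℝ} (hy : y ∈ Icc b (b + 1)) :
    |v y| ≤ 2 ^ (α + β) * √(weightedEnergy (α + β) b g) * y ^ (ν / 2 - β) := by
  have hb0 : 0 < b := by linarith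
  have hy0 : 0 < y := hb0.trans_le hy.1
  have hby : b ^ (-β) ≤ 2 ^ β * y ^ (ν / 2 - β) :=
    calc b ^ (-β) = 2 ^ β * (2 * b) ^ (-β) := by
          rw [mul_rpow zero_le_two hb0.le, rpow_neg zero_le_two]
          field_simp
      _ ≤ 2 ^ β * y ^ (-β) := mul_le_mul_of_nonneg_left
          (rpow_le_rpow_of_nonpos hy0 (by linarith [hy.2]) (by linarith)) (by positivity)
      _ ≤ 2 ^ β * y ^ (ν / 2 - β) := mul_le_mul_of_nonneg_left
          (rpow_le_rpow_of_exponent_le (hb.trans hy.1) (by linarith)) (by positivity)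
  calc |v y| ≤ 2 ^ α * √(weightedEnergy (α + β) b g) * b ^ (-β) :=
        h.abs_v_le_of_one_le hb hv0 hw0 hα hβ hy
    _ ≤ 2 ^ α * √(weightedEnergy (α + β) b g) * (2 ^ β * y ^ (ν / 2 - β)) := by
        gcongr
    _ = 2 ^ (α + β) * √(weightedEnergy (α + β) b g) * y ^ (ν / 2 - β) := by
        rw [rpow_add two_pos]
        ring

end WeightedDerivChain

theorem exists_abs_w_le_of_lt_one {α β e : ℝ} (hα : 0 ≤ α) (he : 0 ≤ e)
    (he₁ : α + β - 1 / 2 < e) (he₂ : e < 2 * α + 1) :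
    ∃ K > 0, ∀ b : ℝ, ∀ v w g : ℝ → ℝ, 0 < b → b < 1 → WeightedDerivChain α b v w g →
      ∫ x in b..b + 1, w x * x ^ (2 * α) = 0 → ∀ s ∈ Icc b (b + 1),
      |w s| ≤ K * √(weightedEnergy (α + β) b g) * s ^ (-e) := by
  have hr : 0 < -(2 * (α + β)) + 1 + 2 * e := by linarith
  set c := (2 : ℝ) ^ (-(2 * (α + β)) + 1 + 2 * e) / (-(2 * (α + β)) + 1 + 2 * e)
  have hc : 0 < c := div_pos (rpow_pos_of_pos two_pos _) hr
  obtain ⟨K, hK, hmean⟩ := exists_abs_le_mul_rpow_of_integral_mul_rpow_eq_zero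
    (by positivity : 0 ≤ 2 * α) he (by linarith)
  refine ⟨K * √c, by positivity, fun b v w g hb hb1 h hw0 s hs => ?_⟩
  set D := √(weightedEnergy (α + β) b g)
  refine (hmean b hb hb1 w h.continuousOn_w hw0 (D * √c) (fun z hz x hx hzx => ?_) s hs).trans_eq
    (by ring)
  have hz0 : 0 < z := hb.trans_le hz.1
  refine (h.abs_sub_w_le hb (α + β) hz hx hzx).trans ?_
  rw [mul_assoc]
  gcongr
  calc √(∫ σ in z..x, σ ^ (-(2 * (α + β))))
      ≤ √(c * z ^ (-(2 * e))) :=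
        sqrt_le_sqrt (integral_rpow_le_mul_rpow_neg (by positivity) hr hz0 hzx
          (by linarith [hx.2]))
    _ = √c * z ^ (-e) := by
        rw [sqrt_mul hc.le, show -(2 * e) = -e * 2 by ring, rpow_mul hz0.le, rpow_two,
          sqrt_sq (rpow_nonneg hz0.le _)]

theorem exists_abs_v_le_of_lt_one {α β e E : ℝ} (hβ : 0 ≤ β) (hE : 0 ≤ E) (hβE : -1 < 2 * β - E)
    (heE : 0 < α - e + 1 + E) :
    ∃ K > 0, ∀ b : ℝ, ∀ v w g : ℝ → ℝ, 0 < b → b < 1 → WeightedDerivChain α b v w g →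
      ∫ x in b..b + 1, v x * x ^ (2 * β) = 0 → ∀ B : ℝ,
      (∀ s ∈ Icc b (b + 1), |w s| ≤ B * s ^ (-e)) → ∀ y ∈ Icc b (b + 1),
      |v y| ≤ K * B * y ^ (-E) := by
  set c := (2 : ℝ) ^ (α - e + 1 + E) / (α - e + 1 + E)
  have hc : 0 < c := div_pos (rpow_pos_of_pos two_pos _) heE
  obtain ⟨K, hK, hmean⟩ := exists_abs_le_mul_rpow_of_integral_mul_rpow_eq_zero
    (by positivity : 0 ≤ 2 * β) hE hβE
  refine ⟨K * c, by positivity, fun b v w g hb hb1 h hv0 B hw y hy => ?_⟩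
  have hpos : ∀ x ∈ Icc b (b + 1), 0 < x := fun x hx => hb.trans_le hx.1
  have hB : 0 ≤ B := by
    have hb' : b ∈ Icc b (b + 1) := left_mem_Icc.2 (by linarith)
    exact nonneg_of_mul_nonneg_left ((abs_nonneg _).trans (hw b hb')) (rpow_pos_of_pos hb _)
  refine (hmean b hb hb1 v h.continuousOn_v hv0 (B * c) (fun t ht x hx htx => ?_) y hy).trans_eq
    (by ring)
  have hsub : Icc t x ⊆ Icc b (b + 1) := Icc_subset_Icc ht.1 hx.2
  rw [h.sub_v t ht x hx]
  calc |∫ s in t..x, w s * s ^ α| ≤ ∫ s in t..x, B * s ^ (α - e) := by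
        rw [← Real.norm_eq_abs]
        refine norm_integral_le_of_norm_le htx (Filter.Eventually.of_forall fun s hs => ?_)
          (((continuousOn_rpow_const_Icc (hb.trans_le ht.1) _).const_smul B
            ).intervalIntegrable_of_Icc htx)
        have hs0 : 0 < s := hpos s (hsub (Ioc_subset_Icc_self hs))
        rw [norm_mul, Real.norm_eq_abs, norm_of_nonneg (rpow_nonneg hs0.le _), rpow_sub hs0,
          div_eq_mul_inv, ← rpow_neg hs0.le, mul_comm (s ^ α), ← mul_assoc]
        exact mul_le_mul_of_nonneg_right (hw s (hsub (Ioc_subset_Icc_self hs)))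
          (rpow_nonneg hs0.le _)
    _ = B * ∫ s in t..x, s ^ (α - e) := intervalIntegral.integral_const_mul _ _
    _ ≤ B * (c * t ^ (-E)) := by
        gcongr
        exact integral_rpow_le_mul_rpow_neg hE heE (hpos t ht) htx (by linarith [hx.2])
    _ = B * c * t ^ (-E) := by ring

theorem exists_abs_v_le_rpow {α β ν : ℝ} (hα : 0 ≤ α) (hβ0 : 0 ≤ β) (hβ : β < 3 / 2 + α)
    (hν0 : 0 ≤ ν) (hν3 : ν < 3) (hνβ : ν ≤ 2 * β) :
    ∃ K > 0, ∀ b : ℝ, ∀ v w g : ℝ → ℝ, 0 < b → WeightedDerivChain α b v w g →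
      ∫ x in b..b + 1, v x * x ^ (2 * β) = 0 → ∫ x in b..b + 1, w x * x ^ (2 * α) = 0 →
      ∀ y ∈ Icc b (b + 1),
      |v y| ≤ K * √(weightedEnergy (α + β) b g) * y ^ (ν / 2 - β) := by
  obtain ⟨e, he_lo, he_hi⟩ :
      ∃ e, max 0 (α + β - 1 / 2) < e ∧ e < min (2 * α + 1) (α + β + 1 - ν / 2) :=
    exists_between <|
      max_lt (lt_min (by linarith) (by linarith)) (lt_min (by linarith) (by linarith))
  rw [max_lt_iff] at he_lo
  rw [lt_min_iff] at he_hi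
  obtain ⟨K₁, hK₁, hw⟩ := exists_abs_w_le_of_lt_one (β := β) hα he_lo.1.le he_lo.2 he_hi.1
  obtain ⟨K₂, hK₂, hv⟩ := exists_abs_v_le_of_lt_one (α := α) (e := e) (E := β - ν / 2) hβ0
    (by linarith) (by linarith) (by linarith)
  refine ⟨K₂ * K₁ + 2 ^ (α + β), by positivity, fun b v w g hb h hv0 hw0 y hy => ?_⟩
  have hmono {K' : ℝ} (hK' : K' ≤ K₂ * K₁ + 2 ^ (α + β)) :
      K' * √(weightedEnergy (α + β) b g) * y ^ (ν / 2 - β)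
        ≤ (K₂ * K₁ + 2 ^ (α + β)) * √(weightedEnergy (α + β) b g)
          * y ^ (ν / 2 - β) :=
    mul_le_mul_of_nonneg_right (mul_le_mul_of_nonneg_right hK' (sqrt_nonneg _))
      (rpow_nonneg (hb.trans_le hy.1).le _)
  rcases lt_or_ge b 1 with hb1 | hb1
  · refine (hv b v w g hb hb1 h hv0 _ (hw b v w g hb hb1 h hw0) y hy).trans
      (le_of_eq_of_le ?_ (hmono (le_add_of_nonneg_right (rpow_nonneg zero_le_two _))))
    rw [neg_sub]
    ring
  · exact (h.abs_v_le_rpow_of_one_le hb1 hv0 hw0 hα hβ0 hν0 hy).trans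
      (hmono (le_add_of_nonneg_left (by positivity)))

theorem integral_div_rpow_mul_rpow_two_mul {u : ℝ → ℝ} {β b c : ℝ} (hb : 0 ≤ b) (hbc : b ≤ c) :
    ∫ x in b..c, u x / x ^ β * x ^ (2 * β) = ∫ x in b..c, u x * x ^ β := by
  refine integral_congr_Ioo_of_le hbc fun x hx => ?_
  have hx0 : 0 < x := hb.trans_lt hx.1
  rw [two_mul, rpow_add hx0]
  field_simp

theorem integral_derivWithin_Icc_div_rpow_mul_rpow_two_mul {v : ℝ → ℝ} {α b c : ℝ} (hb : 0 ≤ b)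
    (hbc : b ≤ c) :
    ∫ x in b..c, derivWithin v (Icc b c) x / x ^ α * x ^ (2 * α)
      = ∫ x in b..c, deriv v x * x ^ α := by
  refine integral_congr_Ioo_of_le hbc fun x hx => ?_
  have hx0 : 0 < x := hb.trans_lt hx.1
  simp only [derivWithin_of_mem_nhds (Icc_mem_nhds hx.1 hx.2), two_mul, rpow_add hx0]
  field_simp

theorem integral_sq_derivWithin_Icc_derivWithin_div_rpow_mul {v : ℝ → ℝ} {α γ b c : ℝ}
    (hbc : b ≤ c) :
    ∫ x in b..c, derivWithin (fun s => derivWithin v (Icc b c) s / s ^ α) (Icc b c) x ^ 2 * x ^ γ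
      = ∫ x in b..c, deriv (fun s => deriv v s / s ^ α) x ^ 2 * x ^ γ := by
  refine integral_congr_Ioo_of_le hbc fun x hx => ?_
  have hnhds : (fun s => derivWithin v (Icc b c) s / s ^ α) =ᶠ[nhds x]
      fun s => deriv v s / s ^ α := by
    filter_upwards [Ioo_mem_nhds hx.1 hx.2] with s hs
    rw [derivWithin_of_mem_nhds (Icc_mem_nhds hs.1 hs.2)]
  simp only [derivWithin_of_mem_nhds (Icc_mem_nhds hx.1 hx.2), hnhds.deriv_eq]

theorem sq_div_rpow_le_of_abs_div_rpow_le {a y β ν K D : ℝ} (hy : 0 < y)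
    (h : |a / y ^ β| ≤ K * D * y ^ (ν / 2 - β)) : a ^ 2 / y ^ ν ≤ K ^ 2 * D ^ 2 := by
  have hyβ : 0 < y ^ β := rpow_pos_of_pos hy β
  have ha : |a| ≤ K * D * y ^ (ν / 2) := by
    have := mul_le_mul_of_nonneg_right h hyβ.le
    rwa [abs_div, abs_of_pos hyβ, div_mul_cancel₀ _ hyβ.ne', mul_assoc, ← rpow_add hy,
      sub_add_cancel] at this
  rw [div_le_iff₀ (rpow_pos_of_pos hy ν), ← sq_abs]
  calc |a| ^ 2 ≤ (K * D * y ^ (ν / 2)) ^ 2 := pow_le_pow_left₀ (abs_nonneg a) ha 2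
    _ = K ^ 2 * D ^ 2 * y ^ ν := by
      rw [mul_pow, mul_pow, ← rpow_mul_natCast hy.le]
      norm_num

/-- Sobolev-type lemma: there is `C > 0`, uniform in `b > 0`, such that for every
`u ∈ H²(b,b+1)` satisfying the two integral constraints,
`sup_{b ≤ y ≤ b+1} |u(y)|²/y^ν ≤ C · h_b[u]`. -/
theorem sobolev_type_lemma
    (α β ν : ℝ) (hα : 0 ≤ α) (hβ0 : 0 ≤ β) (hβ : β < 3 / 2 + α)
    (hν0 : 0 ≤ ν) (hν3 : ν < 3) (hνβ : ν ≤ 2 * β) :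
    ∃ C > (0 : ℝ), ∀ b > (0 : ℝ), ∀ u : ℝ → ℝ,
      ContDiffOn ℝ 2 u (Set.Icc b (b + 1)) →
      (∫ x in b..(b + 1), u x * x ^ β) = 0 →
      (∫ x in b..(b + 1), deriv (fun t : ℝ => u t / t ^ β) x * x ^ α) = 0 →
      ∀ y ∈ Set.Icc b (b + 1),
        (u y) ^ 2 / y ^ ν
          ≤ C * ∫ x in b..(b + 1),
              (deriv (fun s : ℝ =>
                deriv (fun r : ℝ => u r / r ^ β) s / s ^ α) x) ^ 2
                * x ^ (2 * (α + β)) := by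
  obtain ⟨K, hK, hbound⟩ := exists_abs_v_le_rpow hα hβ0 hβ hν0 hν3 hνβ
  refine ⟨K ^ 2, by positivity, fun b hb u hu hmean_u hmean_v y hy => ?_⟩
  have hbb : b ≤ b + 1 := by linarith
  have hpos : ∀ x ∈ Icc b (b + 1), 0 < x := fun x hx => hb.trans_le hx.1
  have hv : ContDiffOn ℝ 2 (fun t => u t / t ^ β) (Icc b (b + 1)) :=
    hu.div (contDiffOn_rpow_const_Icc hb β) fun x hx => (rpow_pos_of_pos (hpos x hx) β).ne'
  have hy' := hbound b _ _ _ hb (weightedDerivChain_of_contDiffOn hb hv)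
    ((integral_div_rpow_mul_rpow_two_mul hb.le hbb).trans hmean_u)
    ((integral_derivWithin_Icc_div_rpow_mul_rpow_two_mul hb.le hbb).trans hmean_v) y hy
  rw [weightedEnergy, integral_sq_derivWithin_Icc_derivWithin_div_rpow_mul hbb] at hy'
  rw [← sq_sqrt (integral_nonneg hbb fun x hx =>
    mul_nonneg (sq_nonneg _) (rpow_nonneg (hpos x hx).le _))]
  exact sq_div_rpow_le_of_abs_div_rpow_le (hpos y hy) hy'
end

section
/- Let β ≥ 0 and b > 0, and let u ∈ H²(b, b+1) with ∫_b^{b+1} u(x)x^β dx = 0. Then for every y ∈ [b, b+1], u(y)/y^β · ((b+1)^{2β+1} − b^{2β+1}) = ∫_b^y (u(t)/t^β)' (t^{2β+1} − b^{2β+1}) dt − ∫_y^{b+1} (u(t)/t^β)' ((b+1)^{2β+1} − t^{2β+1}) dt. -/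
/-!
Write `v = u / t^β` and `φ = t^(2β+1)`. Integrating by parts against `φ - φ(b)` on `[b, y]` and
against `φ(b+1) - φ` on `[y, b+1]`, the boundary terms combine to `v(y) (φ(b+1) - φ(b))`, while the
remaining integrals add up to `∫_b^{b+1} v φ' = (2β+1) ∫_b^{b+1} u t^β`, which vanishes by the moment
condition.
-/

open Real MeasureTheory Set intervalIntegral

variable {f g : ℝ → ℝ} {a c : ℝ}

theorem ContDiffOn.hasDerivAt_deriv_of_mem_Ioo (hf : ContDiffOn ℝ 1 f (Icc a c)) {t : ℝ}
    (ht : t ∈ Ioo a c) : HasDerivAt f (deriv f t) t :=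
  ((hf.differentiableOn one_ne_zero t (Ioo_subset_Icc_self ht)).differentiableAt
    (Icc_mem_nhds ht.1 ht.2)).hasDerivAt

theorem ContDiffOn.intervalIntegrable_deriv (hf : ContDiffOn ℝ 1 f (Icc a c)) (hac : a < c) :
    IntervalIntegrable (deriv f) volume a c := by
  have hcont : ContinuousOn (derivWithin f (Icc a c)) (uIcc a c) := by
    rw [uIcc_of_le hac.le]
    exact hf.continuousOn_derivWithin (uniqueDiffOn_Icc hac) le_rfl
  refine (intervalIntegrable_congr_uIoo fun t ht => ?_).1 hcont.intervalIntegrable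
  rw [uIoo_of_le hac.le] at ht
  exact derivWithin_of_mem_nhds (Icc_mem_nhds ht.1 ht.2)

theorem integral_deriv_mul_eq_sub_integral_mul_deriv (hf : ContDiffOn ℝ 1 f (Icc a c))
    (hg : ContDiffOn ℝ 1 g (Icc a c)) (hac : a < c) {p q : ℝ} (hp : p ∈ Icc a c)
    (hq : q ∈ Icc a c) :
    ∫ t in p..q, deriv f t * g t = f q * g q - f p * g p - ∫ t in p..q, f t * deriv g t := by
  have hIoo : Ioo (min p q) (max p q) ⊆ Ioo a c :=
    Ioo_subset_Ioo (le_min hp.1 hq.1) (max_le hp.2 hq.2)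
  have hIcc : uIcc p q ⊆ Icc a c := uIcc_subset_Icc hp hq
  have hsub : uIcc p q ⊆ uIcc a c := by rwa [uIcc_of_le hac.le]
  have := integral_mul_deriv_eq_deriv_mul_of_hasDerivAt (hf.continuousOn.mono hIcc)
    (hg.continuousOn.mono hIcc) (fun t ht => hf.hasDerivAt_deriv_of_mem_Ioo (hIoo ht))
    (fun t ht => hg.hasDerivAt_deriv_of_mem_Ioo (hIoo ht))
    ((hf.intervalIntegrable_deriv hac).mono_set hsub)
    ((hg.intervalIntegrable_deriv hac).mono_set hsub)
  linarith

theorem integral_deriv_mul_sub_integral_deriv_mul_eq (hf : ContDiffOn ℝ 1 f (Icc a c))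
    (hg : ContDiffOn ℝ 1 g (Icc a c)) (hac : a < c) {y : ℝ} (hy : y ∈ Icc a c) :
    (∫ t in a..y, deriv f t * (g t - g a)) - ∫ t in y..c, deriv f t * (g c - g t)
      = f y * (g c - g a) - ∫ t in a..c, f t * deriv g t := by
  have ha : a ∈ Icc a c := left_mem_Icc.2 hac.le
  have hc : c ∈ Icc a c := right_mem_Icc.2 hac.le
  have hleft := integral_deriv_mul_eq_sub_integral_mul_deriv hf
    (hg.sub (contDiffOn_const (c := g a))) hac ha hy
  have hright := integral_deriv_mul_eq_sub_integral_mul_deriv hf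
    ((contDiffOn_const (c := g c)).sub hg) hac hy hc
  simp only [deriv_sub_const, deriv_const_sub, mul_neg, intervalIntegral.integral_neg, sub_self,
    mul_zero] at hleft hright
  have hint : ∀ {p q}, p ∈ Icc a c → q ∈ Icc a c →
      IntervalIntegrable (fun t => f t * deriv g t) volume p q := fun hp hq =>
    ((hg.intervalIntegrable_deriv hac).continuousOn_mul
      (hf.continuousOn.mono (uIcc_of_le hac.le).subset)).mono_set
      (uIcc_subset_uIcc (Icc_subset_uIcc hp) (Icc_subset_uIcc hq))
  rw [hleft, hright, ← integral_add_adjacent_intervals (hint ha hy) (hint hy hc)]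
  ring

theorem integral_div_rpow_mul_deriv_rpow (u : ℝ → ℝ) (β : ℝ) (ha : 0 < a) (hac : a ≤ c) :
    ∫ t in a..c, u t / t ^ β * deriv (fun s : ℝ => s ^ (2 * β + 1)) t
      = (2 * β + 1) * ∫ t in a..c, u t * t ^ β := by
  rw [← intervalIntegral.integral_const_mul]
  refine integral_congr fun t ht => ?_
  have htpos : 0 < t := ha.trans_le (uIcc_of_le hac ▸ ht).1
  rw [Real.deriv_rpow_const, show 2 * β + 1 - 1 = β + β by ring, rpow_add htpos]
  field_simp

theorem representation_formula_general
    (β b : ℝ) (hb : 0 < b)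
    (u : ℝ → ℝ) (hu : ContDiffOn ℝ 2 u (Set.Icc b (b + 1)))
    (hcond : ∫ x in b..(b + 1), u x * x ^ β = 0) :
    ∀ y ∈ Set.Icc b (b + 1),
      u y / y ^ β * ((b + 1) ^ (2 * β + 1) - b ^ (2 * β + 1))
        = (∫ t in b..y,
            deriv (fun s : ℝ => u s / s ^ β) t * (t ^ (2 * β + 1) - b ^ (2 * β + 1)))
          - ∫ t in y..(b + 1),
              deriv (fun s : ℝ => u s / s ^ β) t
                * ((b + 1) ^ (2 * β + 1) - t ^ (2 * β + 1)) := by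
  intro y hy
  have hne : ∀ t ∈ Icc b (b + 1), t ≠ 0 := fun t ht => (hb.trans_le ht.1).ne'
  have hpow : ∀ p : ℝ, ContDiffOn ℝ 1 (fun s : ℝ => s ^ p) (Icc b (b + 1)) := fun p =>
    contDiffOn_id.rpow_const_of_ne hne
  have hv : ContDiffOn ℝ 1 (fun s => u s / s ^ β) (Icc b (b + 1)) :=
    (hu.of_le one_le_two).div (hpow β) fun t ht => (rpow_pos_of_pos (hb.trans_le ht.1) β).ne'
  have key := integral_deriv_mul_sub_integral_deriv_mul_eq hv (hpow (2 * β + 1))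
    (lt_add_one b) hy
  rw [integral_div_rpow_mul_deriv_rpow u β hb (le_add_of_nonneg_right zero_le_one), hcond,
    mul_zero, sub_zero] at key
  exact key.symm

/-- Representation formula for `u/x^β` under the moment condition
`∫_b^{b+1} u x^β dx = 0`. -/
theorem representation_formula
    (β b : ℝ) (hβ : 0 ≤ β) (hb : 0 < b)
    (u : ℝ → ℝ) (hu : ContDiffOn ℝ 2 u (Set.Icc b (b + 1)))
    (hcond : ∫ x in b..(b + 1), u x * x ^ β = 0) :
    ∀ y ∈ Set.Icc b (b + 1),
      u y / y ^ β * ((b + 1) ^ (2 * β + 1) - b ^ (2 * β + 1))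
        = (∫ t in b..y,
            deriv (fun s : ℝ => u s / s ^ β) t * (t ^ (2 * β + 1) - b ^ (2 * β + 1)))
          - ∫ t in y..(b + 1),
              deriv (fun s : ℝ => u s / s ^ β) t
                * ((b + 1) ^ (2 * β + 1) - t ^ (2 * β + 1)) :=
  representation_formula_general β b hb u hu hcond
end

section
/- Let α ≥ 0, 0 ≤ β < 3/2 + α, 0 ≤ ν < 3 with ν ≤ 2β, and let C be the constant from the Sobolev-type lemma (sup_{[b,b+1]}|u|²/y^ν ≤ C·h_b[u] for u satisfying the two constraints). If b > 0 and V ≥ 0 is bounded with ∫_b^{b+1} V(x)x^ν dx ≤ 1/C, then every linear subspace F ⊆ H²(b, b+1) on which h_b[f] − ∫_b^{b+1} V|f|² dx < 0 for all nonzero f ∈ F has dimension at most 2. -/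
open Real MeasureTheory Set intervalIntegral

/-!
For `u` in the kernel of the two constraint functionals `u ↦ ∫ u x^β` and
`u ↦ ∫ (u/x^β)' x^α`, the Sobolev-type bound gives `u² ≤ C h_b[u] x^ν` on `[b, b+1]`, so
`∫ V u² ≤ C h_b[u] ∫ V x^ν ≤ h_b[u]`. Hence the form `h_b − ∫ V|·|²` is nonnegative on that
kernel, and a subspace on which it is negative definite injects into `ℝ²`.
-/

def contDiffOnSubmodule (n : WithTop ℕ∞) (s : Set ℝ) : Submodule ℝ (ℝ → ℝ) where
  carrier := {f | ContDiffOn ℝ n f s}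
  add_mem' := ContDiffOn.add
  zero_mem' := contDiffOn_const
  smul_mem' c _ hf := hf.const_smul c

section Calculus

variable {a b : ℝ} {f g w : ℝ → ℝ}

theorem ContDiffOn.div_rpow_const {n : WithTop ℕ∞} {s : Set ℝ} (hs : s ⊆ Ioi 0)
    (hf : ContDiffOn ℝ n f s) (β : ℝ) : ContDiffOn ℝ n (fun t => f t / t ^ β) s :=
  hf.div (contDiffOn_id.rpow_const_of_ne fun _ hx => (hs hx).ne')
    fun _ hx => (rpow_pos_of_pos (hs hx) β).ne'

theorem continuousOn_rpow_const_of_subset_Ioi {s : Set ℝ} (hs : s ⊆ Ioi 0) (p : ℝ) :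
    ContinuousOn (fun x : ℝ => x ^ p) s :=
  continuousOn_id.rpow_const fun _ hx => Or.inl (hs hx).ne'

theorem intervalIntegral.integral_deriv_mul_eq_derivWithin (hab : a ≤ b) :
    ∫ x in a..b, deriv f x * w x = ∫ x in a..b, derivWithin f (Icc a b) x * w x := by
  refine integral_congr_ae ?_
  filter_upwards [compl_mem_ae_iff.mpr (measure_singleton b)] with x hxb hx
  rw [uIoc_of_le hab] at hx
  rw [derivWithin_of_mem_nhds (Icc_mem_nhds hx.1 (lt_of_le_of_ne hx.2 hxb))]

theorem intervalIntegral.integral_deriv_add_mul (hab : a < b)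
    (hf : ContDiffOn ℝ 1 f (Icc a b)) (hg : ContDiffOn ℝ 1 g (Icc a b))
    (hw : ContinuousOn w (Icc a b)) :
    ∫ x in a..b, deriv (fun t => f t + g t) x * w x
      = (∫ x in a..b, deriv f x * w x) + ∫ x in a..b, deriv g x * w x := by
  have hint : ∀ {h : ℝ → ℝ}, ContDiffOn ℝ 1 h (Icc a b) →
      IntervalIntegrable (fun x => derivWithin h (Icc a b) x * w x) volume a b := fun hh =>
    ((hh.continuousOn_derivWithin (uniqueDiffOn_Icc hab) le_rfl).mul hw).intervalIntegrable_of_Icc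
      hab.le
  simp only [integral_deriv_mul_eq_derivWithin hab.le]
  rw [← integral_add (hint hf) (hint hg)]
  refine integral_congr fun x hx => ?_
  rw [uIcc_of_le hab.le] at hx
  rw [derivWithin_fun_add (hf.differentiableOn one_ne_zero x hx)
    (hg.differentiableOn one_ne_zero x hx), add_mul]

end Calculus

section Potential

variable {a b M K : ℝ} {V g w : ℝ → ℝ}

theorem Measurable.intervalIntegrable_mul_continuousOn (hV : Measurable V)
    (hVM : ∀ x, |V x| ≤ M) (hg : ContinuousOn g (uIcc a b)) :
    IntervalIntegrable (fun x => V x * g x) volume a b := by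
  have hVint : IntervalIntegrable V volume a b :=
    intervalIntegrable_iff.mpr <| Measure.integrableOn_of_bounded measure_Ioc_lt_top.ne
      hV.aestronglyMeasurable (M := M) (ae_of_all _ hVM)
  exact hVint.mul_continuousOn hg

theorem intervalIntegral.integral_mul_le_mul_integral_mul (hab : a ≤ b) (hV : Measurable V)
    (hV0 : ∀ x, 0 ≤ V x) (hVM : ∀ x, V x ≤ M) (hg : ContinuousOn g (Icc a b))
    (hw : ContinuousOn w (Icc a b)) (hgw : ∀ x ∈ Icc a b, g x ≤ K * w x) :
    ∫ x in a..b, V x * g x ≤ K * ∫ x in a..b, V x * w x := by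
  have hVM' : ∀ x, |V x| ≤ M := fun x => (abs_of_nonneg (hV0 x)).trans_le (hVM x)
  rw [← uIcc_of_le hab] at hg hw
  rw [← integral_const_mul]
  refine integral_mono_on hab (hV.intervalIntegrable_mul_continuousOn hVM' hg)
    ((hV.intervalIntegrable_mul_continuousOn hVM' hw).const_mul K) fun x hx => ?_
  calc V x * g x ≤ V x * (K * w x) := mul_le_mul_of_nonneg_left (hgw x hx) (hV0 x)
    _ = K * (V x * w x) := by ring

end Potential

noncomputable def constraintMap {b : ℝ} (hb : 0 < b) (α β : ℝ) :
    contDiffOnSubmodule 2 (Icc b (b + 1)) →ₗ[ℝ] ℝ × ℝ where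
  toFun u := (∫ x in b..(b + 1), (u : ℝ → ℝ) x * x ^ β,
    ∫ x in b..(b + 1), deriv (fun t => (u : ℝ → ℝ) t / t ^ β) x * x ^ α)
  map_add' u v := by
    have hpos : Icc b (b + 1) ⊆ Ioi 0 := fun x hx => hb.trans_le hx.1
    have hbb : b ≤ b + 1 := by linarith
    have hC1 : ∀ u : contDiffOnSubmodule 2 (Icc b (b + 1)),
        ContDiffOn ℝ 1 (fun t => (u : ℝ → ℝ) t / t ^ β) (Icc b (b + 1)) := fun u =>
      (ContDiffOn.div_rpow_const hpos u.2 β).of_le (by norm_num)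
    have hint : ∀ u : contDiffOnSubmodule 2 (Icc b (b + 1)),
        IntervalIntegrable (fun x => (u : ℝ → ℝ) x * x ^ β) volume b (b + 1) := fun u =>
      ContinuousOn.intervalIntegrable_of_Icc hbb
        (u.2.continuousOn.mul (continuousOn_rpow_const_of_subset_Ioi hpos β))
    simp only [Submodule.coe_add, Pi.add_apply, add_mul, add_div, Prod.mk_add_mk]
    rw [integral_add (hint u) (hint v), integral_deriv_add_mul (by linarith) (hC1 u) (hC1 v)
      (continuousOn_rpow_const_of_subset_Ioi hpos α)]
  map_smul' c u := by
    simp only [Submodule.coe_smul, Pi.smul_apply, smul_eq_mul, mul_div_assoc,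
      deriv_const_mul_field', mul_assoc, intervalIntegral.integral_const_mul, RingHom.id_apply,
      Prod.smul_mk]

theorem negative_subspace_dim_le_two_general
    (α β ν : ℝ)
    (C : ℝ) (hC : 0 < C)
    (hsob : ∀ b > (0 : ℝ), ∀ u : ℝ → ℝ,
      ContDiffOn ℝ 2 u (Set.Icc b (b + 1)) →
      (∫ x in b..(b + 1), u x * x ^ β) = 0 →
      (∫ x in b..(b + 1), deriv (fun t : ℝ => u t / t ^ β) x * x ^ α) = 0 →
      ∀ y ∈ Set.Icc b (b + 1),
        (u y) ^ 2 / y ^ ν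
          ≤ C * ∫ x in b..(b + 1),
              (deriv (fun s : ℝ =>
                deriv (fun r : ℝ => u r / r ^ β) s / s ^ α) x) ^ 2
                * x ^ (2 * (α + β)))
    (b : ℝ) (hb : 0 < b)
    (V : ℝ → ℝ) (hVmeas : Measurable V) (hVpos : ∀ x, 0 ≤ V x)
    (hVbdd : ∃ M : ℝ, ∀ x, V x ≤ M)
    (hVint : (∫ x in b..(b + 1), V x * x ^ ν) ≤ 1 / C)
    (F : Submodule ℝ (ℝ → ℝ))
    (hF : ∀ f ∈ F, ContDiffOn ℝ 2 f (Set.Icc b (b + 1)))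
    (hneg : ∀ f ∈ F, f ≠ 0 →
      (∫ x in b..(b + 1),
        (deriv (fun s : ℝ =>
          deriv (fun r : ℝ => f r / r ^ β) s / s ^ α) x) ^ 2
          * x ^ (2 * (α + β)))
        - (∫ x in b..(b + 1), V x * (f x) ^ 2) < 0) :
    Module.rank ℝ F ≤ 2 := by
  obtain ⟨M, hM⟩ := hVbdd
  have hbb : b ≤ b + 1 := by linarith
  let L : F →ₗ[ℝ] ℝ × ℝ := (constraintMap hb α β).comp (Submodule.inclusion hF)
  suffices hL : Function.Injective L by
    calc Module.rank ℝ F ≤ Module.rank ℝ (ℝ × ℝ) := L.rank_le_of_injective hL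
      _ = 2 := by rw [rank_prod, Module.rank_self, Cardinal.lift_id, one_add_one_eq_two]
  rw [← LinearMap.ker_eq_bot, Submodule.eq_bot_iff]
  rintro ⟨u, huF⟩ hu
  by_contra hu0
  set H := ∫ x in b..(b + 1),
    (deriv (fun s : ℝ => deriv (fun r : ℝ => u r / r ^ β) s / s ^ α) x) ^ 2
      * x ^ (2 * (α + β))
  have hH : 0 ≤ H := integral_nonneg hbb fun x hx =>
    mul_nonneg (sq_nonneg _) (rpow_nonneg (hb.le.trans hx.1) _)
  have hsq : ∀ y ∈ Icc b (b + 1), u y ^ 2 ≤ C * H * y ^ ν := fun y hy =>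
    (div_le_iff₀ (rpow_pos_of_pos (hb.trans_le hy.1) ν)).mp
      (hsob b hb u (hF u huF) (congrArg Prod.fst hu) (congrArg Prod.snd hu) y hy)
  have hpot : ∫ x in b..(b + 1), V x * u x ^ 2 ≤ H :=
    calc ∫ x in b..(b + 1), V x * u x ^ 2 ≤ C * H * ∫ x in b..(b + 1), V x * x ^ ν :=
          integral_mul_le_mul_integral_mul hbb hVmeas hVpos hM ((hF u huF).continuousOn.pow 2)
            (continuousOn_rpow_const_of_subset_Ioi (fun x hx => hb.trans_le hx.1) ν) hsq
      _ ≤ C * H * (1 / C) := mul_le_mul_of_nonneg_left hVint (mul_nonneg hC.le hH)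
      _ = H := by field_simp
  have := hneg u huF fun h => hu0 (Subtype.ext h)
  linarith

/-- If `∫_b^{b+1} V x^ν dx ≤ 1/C`, where `C` is the constant of the Sobolev-type lemma,
then any subspace of `H²(b,b+1)` on which the form `h_b − ∫ V|·|²` is negative definite
has dimension at most 2. -/
theorem negative_subspace_dim_le_two
    (α β ν : ℝ) (hα : 0 ≤ α) (hβ0 : 0 ≤ β) (hβ : β < 3 / 2 + α)
    (hν0 : 0 ≤ ν) (hν3 : ν < 3) (hνβ : ν ≤ 2 * β)
    (C : ℝ) (hC : 0 < C)
    (hsob : ∀ b > (0 : ℝ), ∀ u : ℝ → ℝ,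
      ContDiffOn ℝ 2 u (Set.Icc b (b + 1)) →
      (∫ x in b..(b + 1), u x * x ^ β) = 0 →
      (∫ x in b..(b + 1), deriv (fun t : ℝ => u t / t ^ β) x * x ^ α) = 0 →
      ∀ y ∈ Set.Icc b (b + 1),
        (u y) ^ 2 / y ^ ν
          ≤ C * ∫ x in b..(b + 1),
              (deriv (fun s : ℝ =>
                deriv (fun r : ℝ => u r / r ^ β) s / s ^ α) x) ^ 2
                * x ^ (2 * (α + β)))
    (b : ℝ) (hb : 0 < b)
    (V : ℝ → ℝ) (hVmeas : Measurable V) (hVpos : ∀ x, 0 ≤ V x)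
    (hVbdd : ∃ M : ℝ, ∀ x, V x ≤ M)
    (hVint : (∫ x in b..(b + 1), V x * x ^ ν) ≤ 1 / C)
    (F : Submodule ℝ (ℝ → ℝ))
    (hF : ∀ f ∈ F, ContDiffOn ℝ 2 f (Set.Icc b (b + 1)))
    (hneg : ∀ f ∈ F, f ≠ 0 →
      (∫ x in b..(b + 1),
        (deriv (fun s : ℝ =>
          deriv (fun r : ℝ => f r / r ^ β) s / s ^ α) x) ^ 2
          * x ^ (2 * (α + β)))
        - (∫ x in b..(b + 1), V x * (f x) ^ 2) < 0) :
    Module.rank ℝ F ≤ 2 :=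
  negative_subspace_dim_le_two_general α β ν C hC hsob b hb V hVmeas hVpos hVbdd hVint F hF hneg
end

section
/- Let α ≥ 0, β ≥ 0, b > 0, and let V ≥ 0 be bounded with V ≢ 0 on (b, b+1). Then the two-dimensional subspace F = span{x^β, x^{α+β+1}} ⊆ H²(b, b+1) satisfies h_b[f] − ∫_b^{b+1} V|f|² dx < 0 for every nonzero f ∈ F, where h_b[u] = ∫_b^{b+1}|(x^{−α}(u/x^β)')'|² x^{2(α+β)} dx. -/
/-!
On `(0, ∞)` every `f = c₁ x^β + c₂ x^{α+β+1}` factors as `x^β (c₁ + c₂ x^{α+1})`, so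
`x^{-α} (f / x^β)' = (α + 1) c₂` is constant and the kinetic term `h_b[f]` vanishes. The potential
term is positive: `V ≥ 0` is not a.e. zero, while a nonzero `f` vanishes at most once on `(0, ∞)`
because `x ↦ x^{α+1}` is injective there.
-/

open Real MeasureTheory Set intervalIntegral Filter

theorem intervalIntegral_pos_of_not_ae_eq_zero {g : ℝ → ℝ} {a b : ℝ} (hg : ∀ x, 0 ≤ g x)
    (hgi : IntervalIntegrable g volume a b) (hne : ¬ ∀ᵐ x ∂volume.restrict (Ioo a b), g x = 0) :
    0 < ∫ x in a..b, g x := by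
  have hab : a < b := by
    by_contra h
    exact hne (by simp [Ioo_eq_empty h])
  rw [integral_pos_iff_support_of_nonneg_ae (Eventually.of_forall hg) hgi]
  refine ⟨hab, lt_of_lt_of_le ?_ (measure_mono (inter_subset_inter_right _ Ioo_subset_Ioc_self))⟩
  rw [ae_iff, Measure.restrict_apply' measurableSet_Ioo] at hne
  exact pos_iff_ne_zero.mpr hne

theorem intervalIntegrable_of_measurable_of_bounded {V : ℝ → ℝ} {M : ℝ} (hV : Measurable V)
    (hV₀ : ∀ x, 0 ≤ V x) (hVM : ∀ x, V x ≤ M) (a b : ℝ) : IntervalIntegrable V volume a b :=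
  intervalIntegrable_const.mono_fun' hV.aestronglyMeasurable <| Eventually.of_forall fun x => by
    simpa [abs_of_nonneg (hV₀ x)] using hVM x

section Span

variable {α β : ℝ} (c₁ c₂ : ℝ)

theorem span_eq_rpow_mul {x : ℝ} (hx : 0 < x) :
    c₁ * x ^ β + c₂ * x ^ (α + β + 1) = x ^ β * (c₁ + c₂ * x ^ (α + 1)) := by
  rw [show α + β + 1 = α + 1 + β by ring, rpow_add hx]
  ring

theorem span_div_rpow_eq {x : ℝ} (hx : 0 < x) :
    (c₁ * x ^ β + c₂ * x ^ (α + β + 1)) / x ^ β = c₁ + c₂ * x ^ (α + 1) := by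
  rw [span_eq_rpow_mul c₁ c₂ hx, mul_div_cancel_left₀ _ (rpow_pos_of_pos hx β).ne']

theorem deriv_span_div_rpow {s : ℝ} (hs : 0 < s) :
    deriv (fun r => (c₁ * r ^ β + c₂ * r ^ (α + β + 1)) / r ^ β) s = c₂ * ((α + 1) * s ^ α) := by
  have heq : (fun r => (c₁ * r ^ β + c₂ * r ^ (α + β + 1)) / r ^ β)
      =ᶠ[nhds s] fun r => c₁ + c₂ * r ^ (α + 1) :=
    eventually_of_mem (Ioi_mem_nhds hs) fun r hr => span_div_rpow_eq c₁ c₂ hr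
  have hderiv := ((hasDerivAt_rpow_const (p := α + 1) (Or.inl hs.ne')).const_mul c₂).const_add c₁
  rw [heq.deriv_eq, hderiv.deriv, add_sub_cancel_right]

theorem deriv_weighted_deriv_span_eq_zero {x : ℝ} (hx : 0 < x) :
    deriv (fun s => deriv (fun r => (c₁ * r ^ β + c₂ * r ^ (α + β + 1)) / r ^ β) s / s ^ α) x
      = 0 := by
  have heq : (fun s => deriv (fun r => (c₁ * r ^ β + c₂ * r ^ (α + β + 1)) / r ^ β) s / s ^ α)
      =ᶠ[nhds x] fun _ => c₂ * (α + 1) :=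
    eventually_of_mem (Ioi_mem_nhds hx) fun s (hs : 0 < s) => by
      beta_reduce
      rw [deriv_span_div_rpow c₁ c₂ hs, ← mul_assoc, mul_div_cancel_right₀ _
        (rpow_pos_of_pos hs α).ne']
  rw [heq.deriv_eq, deriv_const]

theorem setOf_span_eq_zero_subsingleton (hα : α + 1 ≠ 0) (hc : c₁ ≠ 0 ∨ c₂ ≠ 0) :
    {x : ℝ | 0 < x ∧ c₁ * x ^ β + c₂ * x ^ (α + β + 1) = 0}.Subsingleton := by
  have hfactor : ∀ x, 0 < x → c₁ * x ^ β + c₂ * x ^ (α + β + 1) = 0 →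
      c₂ ≠ 0 ∧ x ^ (α + 1) = -c₁ / c₂ := by
    intro x hx hfx
    rw [span_eq_rpow_mul c₁ c₂ hx, mul_eq_zero, or_iff_right (rpow_pos_of_pos hx β).ne'] at hfx
    have hc₂ : c₂ ≠ 0 := by
      rintro rfl
      exact hc.elim (fun hc₁ => hc₁ (by simpa using hfx)) fun h => h rfl
    exact ⟨hc₂, by field_simp; linarith⟩
  rintro x ⟨hx, hfx⟩ y ⟨hy, hfy⟩
  refine rpow_left_injOn hα hx.le hy.le ?_
  simp only [(hfactor x hx hfx).2, (hfactor y hy hfy).2]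

theorem ae_span_ne_zero_of_pos (hα : α + 1 ≠ 0) (hc : c₁ ≠ 0 ∨ c₂ ≠ 0) :
    ∀ᵐ x, 0 < x → c₁ * x ^ β + c₂ * x ^ (α + β + 1) ≠ 0 := by
  rw [ae_iff]
  simpa only [Classical.not_imp, not_not] using
    (setOf_span_eq_zero_subsingleton (β := β) c₁ c₂ hα hc).measure_zero volume

theorem continuousOn_span_sq {s : Set ℝ} (hs : s ⊆ Ioi 0) :
    ContinuousOn (fun x => (c₁ * x ^ β + c₂ * x ^ (α + β + 1)) ^ 2) s := fun x hx =>
  have hx₀ : x ≠ 0 := (hs hx).ne'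
  ContinuousAt.continuousWithinAt (by fun_prop (disch := exact Or.inl hx₀))

end Span

theorem form_negative_on_span_general
    (α β b : ℝ) (hα : 0 ≤ α) (hb : 0 < b)
    (V : ℝ → ℝ) (hVmeas : Measurable V) (hVpos : ∀ x, 0 ≤ V x)
    (hVbdd : ∃ M : ℝ, ∀ x, V x ≤ M)
    (hVne : ¬ (∀ᵐ x ∂(MeasureTheory.volume.restrict (Set.Ioo b (b + 1))), V x = 0)) :
    ∀ c₁ c₂ : ℝ, (c₁ ≠ 0 ∨ c₂ ≠ 0) →
      (∫ x in b..(b + 1),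
        (deriv (fun s : ℝ =>
          deriv (fun r : ℝ =>
            (c₁ * r ^ β + c₂ * r ^ (α + β + 1)) / r ^ β) s / s ^ α) x) ^ 2
          * x ^ (2 * (α + β)))
        - (∫ x in b..(b + 1), V x * (c₁ * x ^ β + c₂ * x ^ (α + β + 1)) ^ 2) < 0 := by
  intro c₁ c₂ hc
  obtain ⟨M, hVM⟩ := hVbdd
  have hpos : uIcc b (b + 1) ⊆ Ioi 0 := by
    rw [uIcc_of_le (by linarith)]
    exact fun x hx => hb.trans_le hx.1
  have hkinetic : (∫ x in b..(b + 1),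
      (deriv (fun s : ℝ => deriv (fun r : ℝ =>
        (c₁ * r ^ β + c₂ * r ^ (α + β + 1)) / r ^ β) s / s ^ α) x) ^ 2
        * x ^ (2 * (α + β))) = 0 := by
    rw [integral_congr (g := fun _ => 0) fun x hx => by
      simp [deriv_weighted_deriv_span_eq_zero c₁ c₂ (hpos hx)]]
    exact integral_zero
  have hf : ∀ᵐ x ∂volume.restrict (Ioo b (b + 1)), c₁ * x ^ β + c₂ * x ^ (α + β + 1) ≠ 0 := by
    have hα₁ : α + 1 ≠ 0 := by linarith
    filter_upwards [ae_restrict_of_ae (ae_span_ne_zero_of_pos (β := β) c₁ c₂ hα₁ hc),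
      ae_restrict_mem measurableSet_Ioo] with x hfx hx
    exact hfx (hb.trans hx.1)
  have hpotential : 0 < ∫ x in b..(b + 1), V x * (c₁ * x ^ β + c₂ * x ^ (α + β + 1)) ^ 2 := by
    refine intervalIntegral_pos_of_not_ae_eq_zero (fun x => by have := hVpos x; positivity)
      ((intervalIntegrable_of_measurable_of_bounded hVmeas hVpos hVM _ _).mul_continuousOn
        (continuousOn_span_sq c₁ c₂ hpos)) fun hzero => hVne ?_
    filter_upwards [hzero, hf] with x hx hfx
    simpa [hfx] using hx
  rw [hkinetic]
  linarith

/-- On the span of `f₁(x) = x^β` and `f₂(x) = x^{α+β+1}` the form `h_b − ∫ V|·|²` is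
strictly negative, provided `V ≥ 0` is bounded and not a.e. zero on `(b,b+1)`. -/
theorem form_negative_on_span
    (α β b : ℝ) (hα : 0 ≤ α) (hβ : 0 ≤ β) (hb : 0 < b)
    (V : ℝ → ℝ) (hVmeas : Measurable V) (hVpos : ∀ x, 0 ≤ V x)
    (hVbdd : ∃ M : ℝ, ∀ x, V x ≤ M)
    (hVne : ¬ (∀ᵐ x ∂(MeasureTheory.volume.restrict (Set.Ioo b (b + 1))), V x = 0)) :
    ∀ c₁ c₂ : ℝ, (c₁ ≠ 0 ∨ c₂ ≠ 0) →
      (∫ x in b..(b + 1),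
        (deriv (fun s : ℝ =>
          deriv (fun r : ℝ =>
            (c₁ * r ^ β + c₂ * r ^ (α + β + 1)) / r ^ β) s / s ^ α) x) ^ 2
          * x ^ (2 * (α + β)))
        - (∫ x in b..(b + 1), V x * (c₁ * x ^ β + c₂ * x ^ (α + β + 1)) ^ 2) < 0 :=
  form_negative_on_span_general α β b hα hb V hVmeas hVpos hVbdd hVne
end
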